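/- arXiv:1807.08255 — 2 statements merged into one kernel-verified Lean document; each statement's English description precedes it below -/
import Mathlib

section
/- Let m ≥ 1, n = m+1, and let V ⊂ 𝕊^{m} be a (c/N)-net of the unit sphere in ℝ^{m+1}, with c > 0 sufficiently small. Let f be the indicator function of the unit ball of ℝ^{m+1}. Then there is a constant c' = c'(m) > 0 such that the maximal operator at scale N satisfies M_{V,N} f(x) ≥ c'/|x| for all x ∈ ℝ^{m+1} with N/2 < |x| < N. Consequently ‖M_{V,N}‖_{L^2(ℝ^{m+1})} ≳ N^{(m-1)/2} for m ≥ 2. -/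
open MeasureTheory
open scoped Classical

/-- The directional average at scale `r`:
`⟨f⟩_{v,r} (x) = (1/(2r)) ∫_{-r}^{r} f (x - t v) dt`. -/
noncomputable def dirAvgScaled {n : ℕ} (r : ℝ) (f : EuclideanSpace ℝ (Fin n) → ℝ)
    (v x : EuclideanSpace ℝ (Fin n)) : ℝ :=
  (1 / (2 * r)) * ∫ t in (-r : ℝ)..r, f (x - t • v)

/-- The maximal directional averaging operator at scale `r`:
`M_{V,r} f = sup_{v ∈ V} ⟨|f|⟩_{v,r}`. -/
noncomputable def maxDirAvgScaled {n : ℕ} (V : Finset (EuclideanSpace ℝ (Fin n)))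
    (r : ℝ) (f : EuclideanSpace ℝ (Fin n) → ℝ) (x : EuclideanSpace ℝ (Fin n)) : ℝ :=
  ⨆ v ∈ V, dirAvgScaled r (fun y => |f y|) v x

lemma dirAvgScaled_abs_nonneg {n : ℕ} {r : ℝ} (hr : 0 ≤ r) (f : EuclideanSpace ℝ (Fin n) → ℝ)
    (v x : EuclideanSpace ℝ (Fin n)) :
    0 ≤ dirAvgScaled r (fun y => |f y|) v x := by
  unfold dirAvgScaled
  apply mul_nonneg (by positivity)
  apply intervalIntegral.integral_nonneg (by linarith)
  intro t _
  exact abs_nonneg _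

lemma G_eq {n : ℕ} (V : Finset (EuclideanSpace ℝ (Fin n))) (r : ℝ)
    (f : EuclideanSpace ℝ (Fin n) → ℝ) (x v : EuclideanSpace ℝ (Fin n)) :
    (⨆ _ : v ∈ V, dirAvgScaled r (fun y => |f y|) v x)
      = if v ∈ V then dirAvgScaled r (fun y => |f y|) v x else 0 := by

  by_cases h : v ∈ V
  · simp [h]
  · simp [h, Real.iSup_of_isEmpty]

lemma maxDirAvgScaled_nonneg {n : ℕ} (V : Finset (EuclideanSpace ℝ (Fin n))) {r : ℝ}
    (hr : 0 ≤ r) (f : EuclideanSpace ℝ (Fin n) → ℝ) (x : EuclideanSpace ℝ (Fin n)) :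
    0 ≤ maxDirAvgScaled V r f x := by
  apply Real.iSup_nonneg
  intro v
  rw [G_eq]
  split
  · exact dirAvgScaled_abs_nonneg hr f v x
  · exact le_refl _

lemma le_maxDirAvgScaled {n : ℕ} (V : Finset (EuclideanSpace ℝ (Fin n))) {r : ℝ}
    (hr : 0 ≤ r) (f : EuclideanSpace ℝ (Fin n) → ℝ) (x : EuclideanSpace ℝ (Fin n))
    {v : EuclideanSpace ℝ (Fin n)} (hv : v ∈ V) :
    dirAvgScaled r (fun y => |f y|) v x ≤ maxDirAvgScaled V r f x := by
  have hbdd : BddAbove (Set.range fun w =>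
      ⨆ _ : w ∈ V, dirAvgScaled r (fun y => |f y|) w x) := by
    apply Set.Finite.bddAbove
    apply Set.Finite.subset (Set.Finite.insert 0
      ((V : Set (EuclideanSpace ℝ (Fin n))).toFinite.image
        (fun w => dirAvgScaled r (fun y => |f y|) w x)))
    rintro _ ⟨w, rfl⟩
    simp only
    rw [G_eq]
    split
    · exact Set.mem_insert_of_mem _ ⟨w, by assumption, rfl⟩
    · exact Set.mem_insert _ _
  have := le_ciSup hbdd v
  rw [G_eq] at this
  simpa [hv, maxDirAvgScaled] using this

lemma key_pointwise {n : ℕ} (V : Finset (EuclideanSpace ℝ (Fin n))) {N : ℝ} (hN : 2 ≤ N)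
    (x : EuclideanSpace ℝ (Fin n)) (hx1 : N / 2 < ‖x‖) (hx2 : ‖x‖ < N)
    {v : EuclideanSpace ℝ (Fin n)} (hv : v ∈ V) (hvu : ‖‖x‖⁻¹ • x - v‖ ≤ (1/2) / N) :
    1 / (4 * N) ≤ maxDirAvgScaled V N
      ((Metric.closedBall (0 : EuclideanSpace ℝ (Fin n)) 1).indicator fun _ => (1 : ℝ)) x := by
  set f : EuclideanSpace ℝ (Fin n) → ℝ :=
    (Metric.closedBall (0 : EuclideanSpace ℝ (Fin n)) 1).indicator fun _ => (1 : ℝ) with hf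
  have hNpos : (0:ℝ) < N := by linarith
  have hx0 : (0:ℝ) < ‖x‖ := by linarith
  have habs : (fun y => |f y|) = f := by
    funext y
    rw [hf]
    simp only [Set.indicator_apply]
    split_ifs <;> simp
  set u : EuclideanSpace ℝ (Fin n) := ‖x‖⁻¹ • x with hu_def
  have hu : ‖u‖ = 1 := by
    rw [hu_def, norm_smul, norm_inv, norm_norm, inv_mul_cancel₀ hx0.ne']
  set a : ℝ := ‖x‖ - 1/2 with ha_def
  set b : ℝ := ‖x‖ with hb_def
  have hab : a ≤ b := by rw [ha_def, hb_def]; linarith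
  have hmem : ∀ t ∈ Set.Icc a b, x - t • v ∈ Metric.closedBall (0 : EuclideanSpace ℝ (Fin n)) 1 := by
    intro t ht
    obtain ⟨ht1, ht2⟩ := ht
    rw [mem_closedBall_zero_iff]
    have hxu : x = ‖x‖ • u := (smul_inv_smul₀ hx0.ne' x).symm
    have hdecomp : x - t • v = (‖x‖ - t) • u + t • (u - v) := by
      rw [sub_smul, smul_sub, ← hxu]; abel
    rw [hdecomp]
    have h1 : ‖(‖x‖ - t) • u‖ ≤ 1/2 := by
      rw [norm_smul, hu, mul_one, Real.norm_eq_abs, abs_le]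
      constructor <;> [skip; skip] <;> simp only [ha_def, hb_def] at ht1 ht2 <;> linarith
    have h2 : ‖t • (u - v)‖ ≤ 1/2 := by
      rw [norm_smul, Real.norm_eq_abs]
      have htabs : |t| ≤ N := by
        rw [abs_le]
        constructor <;> simp only [ha_def, hb_def] at ht1 ht2 <;> linarith
      calc |t| * ‖u - v‖ ≤ N * ((1/2)/N) :=
            mul_le_mul htabs hvu (norm_nonneg _) hNpos.le
        _ = 1/2 := by field_simp
    calc ‖(‖x‖ - t) • u + t • (u - v)‖ ≤ ‖(‖x‖ - t) • u‖ + ‖t • (u - v)‖ := norm_add_le _ _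
      _ ≤ 1 := by linarith
  set g : ℝ → ℝ := fun t => f (x - t • v) with hg_def
  set S : Set ℝ := (fun t : ℝ => x - t • v) ⁻¹' Metric.closedBall 0 1 with hS_def
  have hcont : Continuous fun t : ℝ => x - t • v := by fun_prop
  have hSmeas : MeasurableSet S := hcont.measurable (measurableSet_closedBall)
  have hg_eq : g = S.indicator fun _ => (1:ℝ) := by
    funext t
    rw [hg_def, hf]
    simp only [Set.indicator_apply, hS_def, Set.mem_preimage]
  have hInt : ∀ p q : ℝ, IntervalIntegrable g volume p q := by
    intro p q
    rw [intervalIntegrable_iff, hg_eq]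
    exact (integrableOn_const measure_Ioc_lt_top.ne).indicator hSmeas
  have hgnn : ∀ t, 0 ≤ g t := by
    intro t
    rw [hg_eq]
    exact Set.indicator_nonneg (fun _ _ => zero_le_one) t
  have hmid : ∫ t in a..b, g t = 1/2 := by
    rw [intervalIntegral.integral_congr (g := fun _ => (1:ℝ))]
    · rw [intervalIntegral.integral_const, smul_eq_mul, mul_one, hb_def, ha_def]; ring
    · intro t ht
      rw [Set.uIcc_of_le hab] at ht
      rw [hg_def, hf]
      exact Set.indicator_of_mem (hmem t ht) _
  have hbig : (1:ℝ)/2 ≤ ∫ t in (-N:ℝ)..N, g t := by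
    have h1 := intervalIntegral.integral_add_adjacent_intervals (hInt (-N) a) (hInt a N)
    have h2 := intervalIntegral.integral_add_adjacent_intervals (hInt a b) (hInt b N)
    have hna : (-N:ℝ) ≤ a := by rw [ha_def]; linarith
    have hbN : b ≤ N := by rw [hb_def]; linarith
    have hnn1 : 0 ≤ ∫ t in (-N:ℝ)..a, g t :=
      intervalIntegral.integral_nonneg hna (fun t _ => hgnn t)
    have hnn2 : 0 ≤ ∫ t in b..N, g t :=
      intervalIntegral.integral_nonneg hbN (fun t _ => hgnn t)
    rw [← h1, ← h2, hmid]
    linarith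
  have hda : 1 / (4 * N) ≤ dirAvgScaled N (fun y => |f y|) v x := by
    rw [habs]
    unfold dirAvgScaled
    calc (1:ℝ) / (4 * N) = (1 / (2 * N)) * (1/2) := by field_simp; ring
      _ ≤ (1 / (2 * N)) * ∫ t in (-N:ℝ)..N, f (x - t • v) :=
          mul_le_mul_of_nonneg_left hbig (by positivity)
  exact le_trans hda (le_maxDirAvgScaled V hNpos.le f x hv)

/-- the standard lower bound example.  If `V ⊂ 𝕊^m ⊂ ℝ^{m+1}` is a
`(c/N)`-net of the unit sphere with `c` sufficiently small, and `f` is the indicator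
of the unit ball, then `M_{V,N} f (x) ≥ c'/|x|` for `N/2 < |x| < N`; consequently,
for `m ≥ 2`, `‖M_{V,N}‖_{L² → L²} ≳ N^{(m-1)/2}`. -/
theorem maxDirAvg_net_lower_bound (m : ℕ) (hm : 1 ≤ m) :
    ∃ c : ℝ, 0 < c ∧ ∃ c' : ℝ, 0 < c' ∧
      ∀ N : ℝ, 2 ≤ N →
      ∀ V : Finset (EuclideanSpace ℝ (Fin (m + 1))),
        (∀ v ∈ V, ‖v‖ = 1) →
        (∀ x : EuclideanSpace ℝ (Fin (m + 1)), ‖x‖ = 1 → ∃ v ∈ V, ‖x - v‖ ≤ c / N) →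
        (∀ x : EuclideanSpace ℝ (Fin (m + 1)), N / 2 < ‖x‖ → ‖x‖ < N →
          c' / ‖x‖ ≤ maxDirAvgScaled V N
            ((Metric.closedBall (0 : EuclideanSpace ℝ (Fin (m + 1))) 1).indicator
              fun _ => (1 : ℝ)) x) ∧
        (2 ≤ m →
          ENNReal.ofReal (c' * N ^ (((m : ℝ) - 1) / 2)) *
              eLpNorm
                ((Metric.closedBall (0 : EuclideanSpace ℝ (Fin (m + 1))) 1).indicator
                  fun _ => (1 : ℝ)) 2 volume ≤
            eLpNorm (maxDirAvgScaled V N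
              ((Metric.closedBall (0 : EuclideanSpace ℝ (Fin (m + 1))) 1).indicator
                fun _ => (1 : ℝ))) 2 volume) := by
  refine ⟨1/2, by norm_num, 1 / (4 * 8 ^ (m + 1)), by positivity, ?_⟩
  intro N hN V hVsphere hVnet
  have hNpos : (0:ℝ) < N := by linarith
  set f : EuclideanSpace ℝ (Fin (m+1)) → ℝ :=
    (Metric.closedBall (0 : EuclideanSpace ℝ (Fin (m+1))) 1).indicator fun _ => (1 : ℝ) with hf
  set c' : ℝ := 1 / (4 * 8 ^ (m + 1)) with hc'
  have h8 : (8:ℝ) ≤ 8 ^ (m+1) := by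
    calc (8:ℝ) = 8 ^ 1 := (pow_one 8).symm
      _ ≤ 8 ^ (m+1) := pow_le_pow_right₀ (by norm_num) (by omega)
  have hc'le : c' ≤ 1/8 := by
    rw [hc']
    rw [div_le_div_iff₀ (by positivity) (by norm_num)]
    nlinarith
  -- the pointwise statement
  have hpoint : ∀ x : EuclideanSpace ℝ (Fin (m + 1)), N / 2 < ‖x‖ → ‖x‖ < N →
      c' / ‖x‖ ≤ maxDirAvgScaled V N f x := by
    intro x hx1 hx2
    have hx0 : (0:ℝ) < ‖x‖ := by linarith
    have hu : ‖(‖x‖⁻¹ • x : EuclideanSpace ℝ (Fin (m+1)))‖ = 1 := by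
      rw [norm_smul, norm_inv, norm_norm, inv_mul_cancel₀ hx0.ne']
    obtain ⟨v, hvV, hvu⟩ := hVnet _ hu
    have hkey := key_pointwise V hN x hx1 hx2 hvV hvu
    refine le_trans ?_ hkey
    rw [div_le_div_iff₀ hx0 (by positivity)]
    nlinarith
  refine ⟨hpoint, ?_⟩
  intro hm2
  -- the L² statement
  set e : EuclideanSpace ℝ (Fin (m+1)) := EuclideanSpace.single (0 : Fin (m+1)) (1:ℝ) with he
  set x₀ : EuclideanSpace ℝ (Fin (m+1)) := (3*N/4) • e with hx₀
  have hx₀norm : ‖x₀‖ = 3*N/4 := by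
    rw [hx₀, norm_smul, he, EuclideanSpace.norm_single, norm_one, mul_one, Real.norm_eq_abs,
      abs_of_nonneg (by linarith)]
  set Mf := maxDirAvgScaled V N f with hMf
  have hMfnn : ∀ y, 0 ≤ Mf y := fun y => maxDirAvgScaled_nonneg V hNpos.le f y
  have hball : ∀ y ∈ Metric.ball x₀ (N/8), 1 / (4 * N) ≤ Mf y := by
    intro y hy
    rw [Metric.mem_ball, dist_eq_norm] at hy
    have htri : |‖y‖ - ‖x₀‖| ≤ ‖y - x₀‖ := abs_norm_sub_norm_le _ _
    rw [abs_le] at htri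
    have hy1 : N / 2 < ‖y‖ := by rw [hx₀norm] at htri; linarith [htri.1]
    have hy2 : ‖y‖ < N := by rw [hx₀norm] at htri; linarith [htri.2]
    have hy0 : (0:ℝ) < ‖y‖ := by linarith
    have hu : ‖(‖y‖⁻¹ • y : EuclideanSpace ℝ (Fin (m+1)))‖ = 1 := by
      rw [norm_smul, norm_inv, norm_norm, inv_mul_cancel₀ hy0.ne']
    obtain ⟨v, hvV, hvu⟩ := hVnet _ hu
    exact key_pointwise V hN y hy1 hy2 hvV hvu
  set g : EuclideanSpace ℝ (Fin (m+1)) → ℝ :=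
    (Metric.ball x₀ (N/8)).indicator fun _ => 1 / (4 * N) with hg
  have hmono : eLpNorm g 2 volume ≤ eLpNorm Mf 2 volume := by
    apply eLpNorm_mono
    intro y
    rw [hg]
    by_cases hy : y ∈ Metric.ball x₀ (N/8)
    · rw [Set.indicator_of_mem hy, Real.norm_eq_abs, Real.norm_eq_abs,
        abs_of_nonneg (by positivity), abs_of_nonneg (hMfnn y)]
      exact hball y hy
    · rw [Set.indicator_of_notMem hy, norm_zero]
      exact norm_nonneg _
  have hgnorm : eLpNorm g 2 volume
      = ENNReal.ofReal (1/(4*N)) * (volume (Metric.ball x₀ (N/8))) ^ ((1:ℝ)/2) := by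
    rw [hg, eLpNorm_indicator_const measurableSet_ball (by norm_num) (by norm_num)]
    rw [Real.enorm_eq_ofReal (by positivity : (0:ℝ) ≤ 1/(4*N))]
    norm_num
  have hfnorm : eLpNorm f 2 volume
      = (volume (Metric.ball (0 : EuclideanSpace ℝ (Fin (m+1))) 1)) ^ ((1:ℝ)/2) := by
    rw [hf, eLpNorm_indicator_const measurableSet_closedBall (by norm_num) (by norm_num)]
    rw [Measure.addHaar_closedBall_eq_addHaar_ball]
    norm_num
  set B := volume (Metric.ball (0 : EuclideanSpace ℝ (Fin (m+1))) 1) with hB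
  have hvol : volume (Metric.ball x₀ (N/8))
      = ENNReal.ofReal ((N/8) ^ (m+1)) * B := by
    rw [Measure.addHaar_ball volume x₀ (by positivity : (0:ℝ) ≤ N/8)]
    rw [finrank_euclideanSpace_fin]
  refine le_trans ?_ hmono
  rw [hgnorm, hfnorm, hvol, ENNReal.mul_rpow_of_nonneg _ _ (by norm_num), ← mul_assoc]
  apply mul_le_mul_left
  rw [ENNReal.ofReal_rpow_of_nonneg (by positivity) (by norm_num), ← ENNReal.ofReal_mul
    (by positivity)]
  apply ENNReal.ofReal_le_ofReal
  -- now a real inequality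
  have hb8 : (0:ℝ) < N/8 := by linarith
  have e1 : (((N/8) ^ (m+1) : ℝ)) ^ ((1:ℝ)/2) = (N/8) ^ (((m:ℝ)+1)/2) := by
    rw [← Real.rpow_natCast (N/8) (m+1), ← Real.rpow_mul hb8.le]
    congr 1
    push_cast
    ring
  have e2 : (N/8 : ℝ) ^ (((m:ℝ)+1)/2) = N ^ (((m:ℝ)+1)/2) / 8 ^ (((m:ℝ)+1)/2) :=
    Real.div_rpow hNpos.le (by norm_num : (0:ℝ) ≤ 8) _
  have e3 : (N:ℝ) ^ (((m:ℝ)+1)/2) = N ^ (((m:ℝ)-1)/2) * N := by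
    nth_rewrite 3 [← Real.rpow_one N]
    rw [← Real.rpow_add hNpos]
    congr 1
    ring
  have h8' : (8:ℝ) ^ (((m:ℝ)+1)/2) ≤ 8 ^ (m+1) := by
    rw [← Real.rpow_natCast (8:ℝ) (m+1)]
    apply Real.rpow_le_rpow_of_exponent_le (by norm_num)
    push_cast
    have : (0:ℝ) ≤ (m:ℝ) := Nat.cast_nonneg m
    linarith
  rw [e1, e2, e3]
  have hNα : (0:ℝ) < N ^ (((m:ℝ)-1)/2) := Real.rpow_pos_of_pos hNpos _
  have h8β : (0:ℝ) < 8 ^ (((m:ℝ)+1)/2) := Real.rpow_pos_of_pos (by norm_num) _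
  have hrhs : 1 / (4*N) * (N ^ (((m:ℝ)-1)/2) * N / 8 ^ (((m:ℝ)+1)/2))
      = N ^ (((m:ℝ)-1)/2) / (4 * 8 ^ (((m:ℝ)+1)/2)) := by
    field_simp
  rw [hrhs]
  rw [hc', div_mul_eq_mul_div, div_le_div_iff₀ (by positivity) (by positivity)]
  nlinarith [mul_le_mul_of_nonneg_left h8' hNα.le, h8β.le]
end

section
/- Let P₁, …, P_c ∈ ℝ[x₁,…,x_n] with 1 ≤ c ≤ n, and let Z = {x ∈ ℝ^n : P₁(x)=⋯=P_c(x)=0}. Fix ρ, R > 0 and set U = {x ∈ Z : |x| < R and max_τ |Δ_τ(x)| ≥ ρ}, where Δ_τ ranges over the determinants of all c×c minors of the Jacobian matrix D(P₁,…,P_c). For α = (α₁,…,α_c) ∈ ℝ^c let V_α = {x : P₁(x)+α₁ = ⋯ = P_c(x)+α_c = 0}. Then for every ε > 0 there exists δ > 0 such that |α| < δ implies: for every x ∈ U there exists y ∈ V_α with |x - y| < ε. -/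
/-!
At a point `x` of `U` some `c × c` minor of the Jacobian is invertible, so the derivative of
`F = (P₁, …, P_c)` at `x` is surjective, and by the implicit function theorem (in its
surjective-derivative form) `F` maps every ball around `x` onto a neighbourhood of `F x = 0`.
Relaxing `‖x‖ < R` to `‖x‖ ≤ R` turns `U` into a compact set `K` of such points, and
compactness together with continuity of `F` makes the size of that neighbourhood uniform:
there is one `δ > 0` with `ball 0 δ ⊆ F '' ball x ε` for every `x ∈ K`. For `‖α‖ < δ`
this provides `y ∈ ball x ε` with `F y = -α`.
-/

open MvPolynomial Metric Filter Topology

theorem IsCompact.exists_ball_subset_image_ball {X Y : Type*} [PseudoMetricSpace X]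
    [PseudoMetricSpace Y] {f : X → Y} {K : Set X} (hK : IsCompact K) (hf : ContinuousOn f K)
    (hopen : ∀ x ∈ K, 𝓝 (f x) ≤ map f (𝓝 x)) {ε : ℝ} (hε : 0 < ε) :
    ∃ δ > 0, ∀ x ∈ K, ball (f x) δ ⊆ f '' ball x ε := by
  refine hK.induction_on (p := fun S => ∃ δ > 0, ∀ x ∈ S, ball (f x) δ ⊆ f '' ball x ε)
    ⟨1, one_pos, by simp⟩ (fun S T hST ⟨δ, hδ, hT⟩ => ⟨δ, hδ, fun x hx => hT x (hST hx)⟩)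
    (fun S T ⟨δ₁, hδ₁, hS⟩ ⟨δ₂, hδ₂, hT⟩ => ⟨min δ₁ δ₂, lt_min hδ₁ hδ₂, ?_⟩) fun z hz => ?_
  · rintro x (hx | hx)
    · exact (ball_subset_ball (min_le_left _ _)).trans (hS x hx)
    · exact (ball_subset_ball (min_le_right _ _)).trans (hT x hx)
  obtain ⟨δ, hδ, hδz⟩ := Metric.mem_nhds_iff.1
    (hopen z hz (image_mem_map (ball_mem_nhds z (half_pos hε))))
  refine ⟨ball z (ε / 2) ∩ f ⁻¹' ball (f z) (δ / 2),
    inter_mem (mem_nhdsWithin_of_mem_nhds (ball_mem_nhds z (half_pos hε)))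
      (hf z hz (ball_mem_nhds _ (half_pos hδ))), δ / 2, half_pos hδ, ?_⟩
  rintro x ⟨hxz, hfx⟩ w hw
  rw [Set.mem_preimage, mem_ball] at hfx
  rw [mem_ball] at hxz hw
  have hwz : w ∈ ball (f z) δ := mem_ball.2 (by linarith [dist_triangle w (f x) (f z)])
  obtain ⟨y, hy, rfl⟩ := hδz hwz
  refine ⟨y, mem_ball.2 ?_, rfl⟩
  linarith [mem_ball.1 hy, dist_triangle y z x, dist_comm x z]

theorem Matrix.mulVec_surjective_of_isUnit_det_submatrix {m n R : Type*} [Fintype m] [Fintype n]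
    [DecidableEq m] [DecidableEq n] [CommRing R] (A : Matrix m n R) (τ : m → n)
    (h : IsUnit (A.submatrix id τ).det) : Function.Surjective A.mulVec := by
  have hAτ : A.submatrix id τ = A * (1 : Matrix n n R).submatrix id τ := by
    simpa using (mul_submatrix_one (Equiv.refl n) τ A).symm
  have hsurj := mulVec_surjective_iff_isUnit.2 ((isUnit_iff_isUnit_det _).2 h)
  rw [hAτ] at hsurj
  exact Function.Surjective.of_comp (g := ((1 : Matrix n n R).submatrix id τ).mulVec)
    (by simpa only [Function.comp_def, mulVec_mulVec] using hsurj)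

theorem Matrix.range_toEuclideanLin_eq_top {𝕜 m n : Type*} [RCLike 𝕜] [Fintype n]
    [DecidableEq n] {A : Matrix m n 𝕜} (h : Function.Surjective A.mulVec) :
    LinearMap.range A.toEuclideanLin = ⊤ :=
  LinearMap.range_eq_top.2 fun w =>
    let ⟨v, hv⟩ := h w.ofLp
    ⟨WithLp.toLp 2 v, by simp [hv]⟩

theorem MvPolynomial.hasStrictFDerivAt_eval_comp {𝕜 E σ : Type*} [NontriviallyNormedField 𝕜]
    [NormedAddCommGroup E] [NormedSpace 𝕜 E] [Fintype σ] (ℓ : σ → E →L[𝕜] 𝕜)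
    (p : MvPolynomial σ 𝕜) (x : E) :
    HasStrictFDerivAt (fun y => eval (fun i => ℓ i y) p)
      (∑ i, eval (fun i => ℓ i x) (pderiv i p) • ℓ i) x := by
  classical
  induction p using MvPolynomial.induction_on with
  | C a => simpa using (hasStrictFDerivAt_const (𝕜 := 𝕜) a x).congr_fderiv (by ext; simp)
  | add p q hp hq =>
    simp only [eval_add]
    refine (hp.add hq).congr_fderiv ?_
    ext v; simp [add_mul, Finset.sum_add_distrib]
  | mul_X p j hp =>
    simp only [eval_mul, eval_X]
    refine (hp.mul (ℓ j).hasStrictFDerivAt).congr_fderiv ?_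
    ext v
    simp [pderiv_X, Pi.single_apply, apply_ite (eval _), mul_add, mul_ite, Finset.sum_add_distrib,
      Finset.mul_sum, mul_comm, mul_left_comm]

noncomputable def MvPolynomial.jacobian {ι σ R : Type*} [CommSemiring R] (P : ι → MvPolynomial σ R)
    (x : σ → R) : Matrix ι σ R :=
  Matrix.of fun j i => eval x (pderiv i (P j))

theorem MvPolynomial.continuous_jacobian {ι σ R : Type*} [CommRing R] [TopologicalSpace R]
    [IsTopologicalRing R] (P : ι → MvPolynomial σ R) : Continuous (jacobian P) :=
  continuous_pi fun _ => continuous_pi fun _ => continuous_eval _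

theorem MvPolynomial.hasStrictFDerivAt_euclidean_eval {𝕜 ι σ : Type*} [RCLike 𝕜] [Fintype ι]
    [Fintype σ] [DecidableEq σ] (P : ι → MvPolynomial σ 𝕜) (x : EuclideanSpace 𝕜 σ) :
    HasStrictFDerivAt
      (fun y : EuclideanSpace 𝕜 σ => WithLp.toLp 2 fun j => eval (fun i => y i) (P j))
      (jacobian P x.ofLp).toEuclideanLin.toContinuousLinearMap x := by
  rw [hasStrictFDerivAt_euclidean]
  intro j
  have h := hasStrictFDerivAt_eval_comp (fun i => EuclideanSpace.proj (𝕜 := 𝕜) i) (P j) x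
  refine h.congr_fderiv ?_
  ext v
  simp [jacobian, Matrix.mulVec, dotProduct, mul_comm]

theorem MvPolynomial.nhds_le_map_euclidean_eval {𝕜 ι σ : Type*} [RCLike 𝕜] [Fintype ι]
    [Fintype σ] [DecidableEq ι] [DecidableEq σ] (P : ι → MvPolynomial σ 𝕜)
    {x : EuclideanSpace 𝕜 σ} (τ : ι → σ)
    (hτ : IsUnit ((jacobian P x.ofLp).submatrix id τ).det) :
    𝓝 (WithLp.toLp 2 fun j => eval (fun i => x i) (P j) : EuclideanSpace 𝕜 ι) ≤
      Filter.map (fun y : EuclideanSpace 𝕜 σ => WithLp.toLp 2 fun j => eval (fun i => y i) (P j))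
        (𝓝 x) :=
  ((hasStrictFDerivAt_euclidean_eval P x).map_nhds_eq_of_surj
    (Matrix.range_toEuclideanLin_eq_top
      (Matrix.mulVec_surjective_of_isUnit_det_submatrix _ τ hτ))).ge

theorem perturbed_variety_approximation_general
    (n c : ℕ)
    (P : Fin c → MvPolynomial (Fin n) ℝ) (ρ R : ℝ) (hρ : 0 < ρ) :
    ∀ ε : ℝ, 0 < ε → ∃ δ : ℝ, 0 < δ ∧
      ∀ α : EuclideanSpace ℝ (Fin c), ‖α‖ < δ →
        ∀ x : EuclideanSpace ℝ (Fin n),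
          (∀ j, eval (fun i => x i) (P j) = 0) →
          ‖x‖ < R →
          (∃ τ : Fin c ↪ Fin n,
            ρ ≤ |(Matrix.of fun j i =>
                    eval (fun i' => x i') (pderiv (τ i) (P j))).det|) →
          ∃ y : EuclideanSpace ℝ (Fin n),
            (∀ j, eval (fun i => y i) (P j) + α j = 0) ∧ ‖x - y‖ < ε := by
  intro ε hε
  set F : EuclideanSpace ℝ (Fin n) → EuclideanSpace ℝ (Fin c) :=
    fun y => WithLp.toLp 2 fun j => eval (fun i => y i) (P j)
  have hFc : Continuous F := continuous_iff_continuousAt.2 fun x =>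
    (hasStrictFDerivAt_euclidean_eval P x).continuousAt
  have hJac : Continuous fun x : EuclideanSpace ℝ (Fin n) => jacobian P x.ofLp :=
    (continuous_jacobian P).comp (PiLp.continuous_ofLp 2 _)
  set K := closedBall 0 R ∩ F ⁻¹' {0} ∩
    ⋃ τ : Fin c ↪ Fin n, {x | ρ ≤ |((jacobian P x.ofLp).submatrix id τ).det|}
  have hK : IsCompact K :=
    ((isCompact_closedBall 0 R).inter_right (isClosed_singleton.preimage hFc)).inter_right
      (isClosed_iUnion_of_finite fun τ =>
        isClosed_le continuous_const ((hJac.matrix_submatrix id τ).matrix_det.abs))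
  have hopen : ∀ x ∈ K, 𝓝 (F x) ≤ map F (𝓝 x) := by
    rintro x ⟨-, hx⟩
    obtain ⟨τ, hτ⟩ := Set.mem_iUnion.1 hx
    exact nhds_le_map_euclidean_eval P τ (isUnit_iff_ne_zero.2 (abs_pos.1 (hρ.trans_le hτ)))
  obtain ⟨δ, hδ, hball⟩ := hK.exists_ball_subset_image_ball hFc.continuousOn hopen hε
  refine ⟨δ, hδ, fun α hα x hx hxR ⟨τ, hτ⟩ => ?_⟩
  have hFx : F x = 0 := by ext j; exact hx j
  -- the minor in `hτ` is `(jacobian P x.ofLp).submatrix id τ` up to unfolding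
  have hxK : x ∈ K := ⟨⟨mem_closedBall_zero_iff.2 hxR.le, hFx⟩, Set.mem_iUnion.2 ⟨τ, hτ⟩⟩
  obtain ⟨y, hy, hFy⟩ := hball x hxK (show -α ∈ ball (F x) δ by simpa [hFx] using hα)
  refine ⟨y, fun j => ?_, by rwa [← dist_eq_norm, dist_comm]⟩
  have hyj : eval (fun i => y i) (P j) = -α j := congrArg (·.ofLp j) hFy
  rw [hyj, neg_add_cancel]

/-- continuity of nonsingular zero sets under constant perturbations
(Lemma 4.2 of the paper, the `V_α` half).  On the part `U` of the common zero set
`Z = Z(P₁,…,P_c)` inside `{|x| < R}` where some `c×c` Jacobian minor has absolute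
determinant at least `ρ`, for every `ε > 0` there is `δ > 0` such that whenever
`|α| < δ`, every point of `U` lies within `ε` of the perturbed variety
`V_α = Z(P₁+α₁, …, P_c+α_c)`. -/
theorem perturbed_variety_approximation
    (n c : ℕ) (hc1 : 1 ≤ c) (hcn : c ≤ n)
    (P : Fin c → MvPolynomial (Fin n) ℝ) (ρ R : ℝ) (hρ : 0 < ρ) (hR : 0 < R) :
    ∀ ε : ℝ, 0 < ε → ∃ δ : ℝ, 0 < δ ∧
      ∀ α : EuclideanSpace ℝ (Fin c), ‖α‖ < δ →
        ∀ x : EuclideanSpace ℝ (Fin n),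
          (∀ j, eval (fun i => x i) (P j) = 0) →
          ‖x‖ < R →
          (∃ τ : Fin c ↪ Fin n,
            ρ ≤ |(Matrix.of fun j i =>
                    eval (fun i' => x i') (pderiv (τ i) (P j))).det|) →
          ∃ y : EuclideanSpace ℝ (Fin n),
            (∀ j, eval (fun i => y i) (P j) + α j = 0) ∧ ‖x - y‖ < ε :=
  perturbed_variety_approximation_general n c P ρ R hρ
end
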